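/- Let B ∈ ℝ^{n×p}. Among all matrices P ∈ ℝ^{n×p} with PᵀP = I_p (n ≥ p), the quantity ‖P - B‖_F² is minimized by P* = MNᵀ, where B = MDNᵀ is a compact singular value decomposition of B with M ∈ ℝ^{n×p}, N ∈ ℝ^{p×p} having orthonormal columns and D diagonal with nonnegative entries. (Orthogonal Procrustes problem.) -/
import Mathlib


open Matrix

/-- Frobenius norm squared of a real matrix. -/
noncomputable def frobSq {n p : ℕ} (A : Matrix (Fin n) (Fin p) ℝ) : ℝ := (Aᵀ * A).trace

lemma col_sq_sum {n p : ℕ} (R : Matrix (Fin n) (Fin p) ℝ) (hR : Rᵀ * R = 1) (i : Fin p) :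
    ∑ k, R k i * R k i = 1 := by
  have := congrFun (congrFun hR i) i
  simpa [Matrix.mul_apply, Matrix.one_apply] using this

lemma trace_mul_diag_le {n p : ℕ} (R M : Matrix (Fin n) (Fin p) ℝ)
    (D : Matrix (Fin p) (Fin p) ℝ)
    (hR : Rᵀ * R = 1) (hM : Mᵀ * M = 1) (hD : D.IsDiag) (hDpos : ∀ i, 0 ≤ D i i) :
    ((Rᵀ * M) * D).trace ≤ D.trace := by
  rw [Matrix.trace, Matrix.trace]
  apply Finset.sum_le_sum
  intro i _
  have hdiag : ((Rᵀ * M) * D) i i = (Rᵀ * M) i i * D i i := by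
    rw [Matrix.mul_apply]
    rw [Finset.sum_eq_single i]
    · intro j _ hj
      rw [hD hj, mul_zero]
    · intro h; exact absurd (Finset.mem_univ i) h
  simp only [Matrix.diag_apply]
  rw [hdiag]
  have hentry : (Rᵀ * M) i i ≤ 1 := by
    have hRi := col_sq_sum R hR i
    have hMi := col_sq_sum M hM i
    have hcs := Finset.sum_mul_sq_le_sq_mul_sq Finset.univ (fun k => R k i) (fun k => M k i)
    simp only [pow_two] at hcs
    rw [Matrix.mul_apply]
    simp only [Matrix.transpose_apply]
    nlinarith [sq_nonneg ((∑ k, R k i * M k i) - 1)]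
  calc (Rᵀ * M) i i * D i i ≤ 1 * D i i :=
        mul_le_mul_of_nonneg_right hentry (hDpos i)
    _ = D i i := one_mul _

/-- Orthogonal Procrustes: if `B = M * D * Nᵀ` is a compact SVD, then `M * Nᵀ` minimizes
`‖P - B‖_F²` over matrices `P` with orthonormal columns. -/
theorem stmt1 {n p : ℕ} (hnp : p ≤ n) (B M : Matrix (Fin n) (Fin p) ℝ)
    (D N : Matrix (Fin p) (Fin p) ℝ)
    (hM : Mᵀ * M = 1) (hN : Nᵀ * N = 1) (hD : D.IsDiag) (hDpos : ∀ i, 0 ≤ D i i)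
    (hSVD : B = M * D * Nᵀ) :
    ∀ P : Matrix (Fin n) (Fin p) ℝ, Pᵀ * P = 1 →
      frobSq (M * Nᵀ - B) ≤ frobSq (P - B) := by
  intro P hP
  have hNN : N * Nᵀ = 1 := mul_eq_one_comm.mp hN
  -- expansion
  have expand : ∀ Q : Matrix (Fin n) (Fin p) ℝ, Qᵀ * Q = 1 →
      frobSq (Q - B) = (p : ℝ) + (Bᵀ * B).trace - 2 * (Qᵀ * B).trace := by
    intro Q hQ
    unfold frobSq
    have h1 : (Q - B)ᵀ * (Q - B) = Qᵀ * Q - Qᵀ * B - Bᵀ * Q + Bᵀ * B := by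
      rw [transpose_sub, Matrix.sub_mul, Matrix.mul_sub, Matrix.mul_sub]
      abel
    rw [h1, hQ]
    have h2 : (Bᵀ * Q).trace = (Qᵀ * B).trace := by
      rw [← Matrix.trace_transpose (Bᵀ * Q), transpose_mul, transpose_transpose]
    simp only [Matrix.trace_add, Matrix.trace_sub, h2, Matrix.trace_one]
    simp [Finset.card_univ]
    ring
  have hMNt : (M * Nᵀ)ᵀ * (M * Nᵀ) = 1 := by
    rw [transpose_mul, transpose_transpose]
    simp only [Matrix.mul_assoc]
    rw [← Matrix.mul_assoc Mᵀ, hM, Matrix.one_mul, hNN]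
  rw [expand P hP, expand (M * Nᵀ) hMNt]
  have hstar : ((M * Nᵀ)ᵀ * B).trace = D.trace := by
    rw [hSVD, transpose_mul, transpose_transpose]
    have e1 : N * Mᵀ * (M * D * Nᵀ) = N * (D * Nᵀ) := by
      simp only [Matrix.mul_assoc]
      rw [← Matrix.mul_assoc Mᵀ, hM, Matrix.one_mul]
    rw [e1, ← Matrix.mul_assoc, Matrix.trace_mul_comm, ← Matrix.mul_assoc, hN, Matrix.one_mul]
  have hPtr : (Pᵀ * B).trace ≤ D.trace := by
    have h3 : (Pᵀ * B).trace = (((P * N)ᵀ * M) * D).trace := by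
      rw [hSVD, transpose_mul]
      rw [show Pᵀ * (M * D * Nᵀ) = (Pᵀ * M * D) * Nᵀ from by simp only [Matrix.mul_assoc]]
      rw [Matrix.trace_mul_comm]
      simp only [Matrix.mul_assoc]
    have hPN : (P * N)ᵀ * (P * N) = 1 := by
      simp only [transpose_mul, Matrix.mul_assoc]
      rw [← Matrix.mul_assoc Pᵀ, hP, Matrix.one_mul, hN]
    rw [h3]
    exact trace_mul_diag_le (P * N) M D hPN hM hD hDpos
  rw [hstar]
  linarith
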